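/- With Q̄, Q̃, G as above and ϑ the stationary distribution of G (ϑG = 0, ϑ1_p = 1), the row vector π := (1/2) ϑ (I_p ⊗ 1₂ᵀ) is a stationary distribution for both Q̄ and Q̃: πQ̄ = 0, πQ̃ = 0, and π1_{2p} = 1. -/

import Mathlib

open Matrix MeasureTheory

/-- `Q` is a generator matrix of a finite CTMC: nonnegative off-diagonal entries
and zero row sums. -/
def IsGenerator {n : Type*} [Fintype n] (Q : Matrix n n ℝ) : Prop :=
  (∀ i j, i ≠ j → 0 ≤ Q i j) ∧ ∀ i, ∑ j, Q i j = 0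

/-- Irreducibility of the CTMC with generator `Q`: the transition matrix `e^Q`
is entrywise positive. -/
def IsIrreducibleGen {n : Type*} [Fintype n] [DecidableEq n] (Q : Matrix n n ℝ) : Prop :=
  ∀ i j, 0 < NormedSpace.exp Q i j

/-- `π` is a stationary distribution of the generator `Q`: `πQ = 0`, `π1 = 1`. -/
def IsStationaryDist {n : Type*} [Fintype n] (Q : Matrix n n ℝ) (π : n → ℝ) : Prop :=
  (∀ i, 0 ≤ π i) ∧ (∑ i, π i = 1) ∧ π ᵥ* Q = 0

/-- The rank-one matrix `1π`. -/
def onePi {n : Type*} (π : n → ℝ) : Matrix n n ℝ :=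
  Matrix.of fun _ j => π j

/-- `Ds` is the deviation matrix `D♯ = ∫₀^∞ (e^{Qu} − 1π) du` of `Q`
(entrywise convergent integral). -/
def IsDeviation {n : Type*} [Fintype n] [DecidableEq n] (Q : Matrix n n ℝ) (π : n → ℝ)
    (Ds : Matrix n n ℝ) : Prop :=
  ∀ i j, IntegrableOn (fun u => NormedSpace.exp (u • Q) i j - π j) (Set.Ioi (0:ℝ)) MeasureTheory.volume ∧
    Ds i j = ∫ u in Set.Ioi (0:ℝ), (NormedSpace.exp (u • Q) i j - π j)

/-- `Dt` is the transient deviation matrix `D♯(t) = ∫₀^t (e^{Qu} − 1π) du` of `Q`. -/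
def IsTransientDeviation {n : Type*} [Fintype n] [DecidableEq n] (Q : Matrix n n ℝ) (π : n → ℝ)
    (Dt : ℝ → Matrix n n ℝ) : Prop :=
  ∀ t i j, Dt t i j = ∫ u in Set.Ioc (0:ℝ) t, (NormedSpace.exp (u • Q) i j - π j)

/-- The `p × 2p` matrix `I_p ⊗ 1₂ᵀ`, where the `2p` index set is `Fin p × Fin 2`. -/
def kronA (p : ℕ) : Matrix (Fin p) (Fin p × Fin 2) ℝ :=
  Matrix.of fun i jk => if jk.1 = i then 1 else 0

/-- The slowness condition `λ_i > S_i = ∑_{j≠i} q_{ij} = -G i i` for a generator `G`. -/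
def IsSlow {p : ℕ} (G : Matrix (Fin p) (Fin p) ℝ) (lam : Fin p → ℝ) : Prop :=
  ∀ i, -G i i < lam i

/-- The `2p × 2p` generator `Q̄` of the MTCP associated with a slow MMPP with
modulating generator `G` and rates `λ`: diagonal `2×2` blocks
`[[−λ_i, λ_i − S_i],[λ_i − S_i, −λ_i]]` (note `λ_i − S_i = λ_i + G i i`) and
off-diagonal blocks `q_{ij} I₂`. -/
def Qbar {p : ℕ} (G : Matrix (Fin p) (Fin p) ℝ) (lam : Fin p → ℝ) :
    Matrix (Fin p × Fin 2) (Fin p × Fin 2) ℝ :=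
  Matrix.of fun ik jl =>
    if ik.1 = jl.1 then (if ik.2 = jl.2 then -lam ik.1 else lam ik.1 + G ik.1 ik.1)
    else (if ik.2 = jl.2 then G ik.1 jl.1 else 0)

/-- The `2p × 2p` generator `Q̃` of the coupled MAP built from the MMPP: diagonal
blocks `[[−(λ_i + S_i), λ_i],[λ_i, −(λ_i + S_i)]]` (note `−(λ_i+S_i) = G i i − λ_i`)
and off-diagonal blocks `q_{ij} I₂`. -/
def Qtil {p : ℕ} (G : Matrix (Fin p) (Fin p) ℝ) (lam : Fin p → ℝ) :
    Matrix (Fin p × Fin 2) (Fin p × Fin 2) ℝ :=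
  Matrix.of fun ik jl =>
    if ik.1 = jl.1 then (if ik.2 = jl.2 then G ik.1 ik.1 - lam ik.1 else lam ik.1)
    else (if ik.2 = jl.2 then G ik.1 jl.1 else 0)

/-- The event-intensity matrix `D̄ = Q̄ − diag(Q̄)` of the associated MTCP. -/
def Dbar {p : ℕ} (G : Matrix (Fin p) (Fin p) ℝ) (lam : Fin p → ℝ) :
    Matrix (Fin p × Fin 2) (Fin p × Fin 2) ℝ :=
  Qbar G lam - Matrix.diagonal fun ik => Qbar G lam ik ik

/-- The event-intensity matrix `D̃` of the coupled MMPP: block diagonal with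
blocks `[[0, λ_i],[λ_i, 0]]`. -/
def Dtil {p : ℕ} (lam : Fin p → ℝ) : Matrix (Fin p × Fin 2) (Fin p × Fin 2) ℝ :=
  Matrix.of fun ik jl => if ik.1 = jl.1 ∧ ik.2 ≠ jl.2 then lam ik.1 else 0

/-- The common stationary distribution `π = (1/2) ϑ (I_p ⊗ 1₂ᵀ)` of `Q̄` and `Q̃`. -/
noncomputable def piHat {p : ℕ} (θ : Fin p → ℝ) : Fin p × Fin 2 → ℝ :=
  (1/2 : ℝ) • (θ ᵥ* kronA p)

/-! Both generators have the block form `Q = (B_{ij})` with `1₂ᵀ B_{ij} = q_{ij} 1₂ᵀ`, i.e. they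
satisfy the intertwining identity `(I_p ⊗ 1₂ᵀ) Q = G (I_p ⊗ 1₂ᵀ)`. Hence
`π Q = ½ ϑ (I_p ⊗ 1₂ᵀ) Q = ½ (ϑ G)(I_p ⊗ 1₂ᵀ) = 0`, while `π` has total mass `½ · 2 · ϑ 1_p = 1`. -/

section Intertwining

variable {p : ℕ}

lemma kronA_mul_apply (Q : Matrix (Fin p × Fin 2) (Fin p × Fin 2) ℝ) (i : Fin p)
    (jl : Fin p × Fin 2) : (kronA p * Q) i jl = ∑ k, Q (i, k) jl := by
  simp [mul_apply, kronA, Fintype.sum_prod_type, Finset.sum_add_distrib]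

lemma mul_kronA_apply (G : Matrix (Fin p) (Fin p) ℝ) (i : Fin p) (jl : Fin p × Fin 2) :
    (G * kronA p) i jl = G i jl.1 := by
  simp [mul_apply, kronA]

lemma kronA_mul_eq_mul_kronA {G : Matrix (Fin p) (Fin p) ℝ}
    {Q : Matrix (Fin p × Fin 2) (Fin p × Fin 2) ℝ}
    (hQ : ∀ i j l, ∑ k, Q (i, k) (j, l) = G i j) : kronA p * Q = G * kronA p := by
  ext i ⟨j, l⟩
  rw [kronA_mul_apply, mul_kronA_apply, hQ]

lemma kronA_mul_Qbar (G : Matrix (Fin p) (Fin p) ℝ) (lam : Fin p → ℝ) :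
    kronA p * Qbar G lam = G * kronA p := by
  refine kronA_mul_eq_mul_kronA fun i j l => ?_
  by_cases h : i = j
  · subst h; fin_cases l <;> simp [Qbar]
  · fin_cases l <;> simp [Qbar, h]

lemma kronA_mul_Qtil (G : Matrix (Fin p) (Fin p) ℝ) (lam : Fin p → ℝ) :
    kronA p * Qtil G lam = G * kronA p := by
  refine kronA_mul_eq_mul_kronA fun i j l => ?_
  by_cases h : i = j
  · subst h; fin_cases l <;> simp [Qtil]
  · fin_cases l <;> simp [Qtil, h]

lemma piHat_vecMul_eq_zero {G : Matrix (Fin p) (Fin p) ℝ}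
    {Q : Matrix (Fin p × Fin 2) (Fin p × Fin 2) ℝ} (hQ : kronA p * Q = G * kronA p)
    {θ : Fin p → ℝ} (hθ : θ ᵥ* G = 0) : piHat θ ᵥ* Q = 0 := by
  rw [piHat, smul_vecMul, vecMul_vecMul, hQ, ← vecMul_vecMul, hθ, zero_vecMul, smul_zero]

lemma sum_piHat (θ : Fin p → ℝ) : ∑ ik, piHat θ ik = ∑ i, θ i := by
  simp [piHat, vecMul, dotProduct, kronA, Fintype.sum_prod_type, ← Finset.mul_sum]

end Intertwining

theorem stmt7_general {p : ℕ} (G : Matrix (Fin p) (Fin p) ℝ) (lam : Fin p → ℝ)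
    (θ : Fin p → ℝ) (hθ : IsStationaryDist G θ) :
    piHat θ ᵥ* Qbar G lam = 0 ∧ piHat θ ᵥ* Qtil G lam = 0 ∧ ∑ ik, piHat θ ik = 1 := by
  obtain ⟨-, hmass, hstat⟩ := hθ
  exact ⟨piHat_vecMul_eq_zero (kronA_mul_Qbar G lam) hstat,
    piHat_vecMul_eq_zero (kronA_mul_Qtil G lam) hstat, (sum_piHat θ).trans hmass⟩

theorem stmt7 {p : ℕ} (G : Matrix (Fin p) (Fin p) ℝ) (lam : Fin p → ℝ)
    (hG : IsGenerator G) (hirr : IsIrreducibleGen G) (hslow : IsSlow G lam)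
    (θ : Fin p → ℝ) (hθ : IsStationaryDist G θ) :
    piHat θ ᵥ* Qbar G lam = 0 ∧ piHat θ ᵥ* Qtil G lam = 0 ∧ ∑ ik, piHat θ ik = 1 :=
  stmt7_general G lam θ hθ
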